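/- arXiv:2302.07186 — 3 statements merged into one kernel-verified Lean document; each statement's English description precedes it below -/
import Mathlib

section
/- Let 𝒳 be a separable metrizable space with its Borel σ-algebra, 𝕏 = (X_t)_{t≥1} a stochastic process on 𝒳, and 𝒯 ⊆ ℕ a possibly random set of times such that the extended process 𝕏̃ = (X_t)_{t∈𝒯} satisfies condition C1. Then for every ε > 0 there exist an integer T_ε ≥ 1 and δ > 0 such that for every measurable set A ⊆ 𝒳: if E[μ̂_{𝕏̃}(A)] ≤ δ, then E[ sup_{T ≥ T_ε} (1/T) Σ_{t ≤ T, t ∈ 𝒯} 1_A(X_t) ] ≤ ε. -/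
open MeasureTheory Filter Set Topology

noncomputable section

variable {Ω : Type*} [MeasurableSpace Ω] {𝒳 : Type*} [MeasurableSpace 𝒳]

/-- Average number of times `t ∈ 𝒯 ω`, `1 ≤ t ≤ T`, with `X t ω ∈ A`, divided by `T`. -/
def avgVisit (X : ℕ → Ω → 𝒳) (𝒯 : Ω → Set ℕ) (A : Set 𝒳) (T : ℕ) (ω : Ω) : ℝ :=
  (T : ℝ)⁻¹ * ∑ t ∈ Finset.Icc 1 T,
    ({s : ℕ | s ∈ 𝒯 ω ∧ X s ω ∈ A}.indicator (fun _ => (1 : ℝ)) t)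

/-- Limit submeasure `μ̂` of the extended process `(X_t)_{t ∈ 𝒯}`. -/
def limitSubmeasure (X : ℕ → Ω → 𝒳) (𝒯 : Ω → Set ℕ) (A : Set 𝒳) (ω : Ω) : ℝ :=
  Filter.limsup (fun T => avgVisit X 𝒯 A T ω) Filter.atTop

/-- Condition C1 for the extended process `(X_t)_{t ∈ 𝒯}`. -/
def SatisfiesC1 (P : Measure Ω) (X : ℕ → Ω → 𝒳) (𝒯 : Ω → Set ℕ) : Prop :=
  ∀ A : ℕ → Set 𝒳, (∀ k, MeasurableSet (A k)) → Antitone A → (⋂ k, A k) = ∅ →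
    Filter.Tendsto (fun k => ∫ ω, limitSubmeasure X 𝒯 (A k) ω ∂P) Filter.atTop (nhds 0)

/-- `T_i^k = ⌊2^u (1 + v·2^{-i})⌋` where `k = u·2^i + v`, `0 ≤ v < 2^i`. -/
def timeGrid (i k : ℕ) : ℕ :=
  ⌊(2 : ℝ) ^ (k / 2 ^ i) * (1 + ((k % 2 ^ i : ℕ) : ℝ) / (2 ^ i : ℝ))⌋₊

/-- `𝒯^i`: times of first appearance of the instance within its period at scale `i`. -/
def scaleTimes (X : ℕ → Ω → 𝒳) (i : ℕ) (ω : Ω) : Set ℕ :=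
  {t | 1 ≤ t ∧ ∀ k, timeGrid i k ≤ t → t < timeGrid i (k + 1) →
    ∀ t', timeGrid i k ≤ t' → t' < t → X t' ω ≠ X t ω}

/-- Condition C4. -/
def SatisfiesC4 (P : Measure Ω) (X : ℕ → Ω → 𝒳) : Prop :=
  ∀ A : ℕ → Set 𝒳, (∀ i, MeasurableSet (A i)) → Pairwise (Function.onFun Disjoint A) →
    Filter.Tendsto (fun i => ∫ ω, limitSubmeasure X (scaleTimes X i) (A i) ω ∂P)
      Filter.atTop (nhds 0)

/-- Supremum over `T ≥ T₀` of the average visit counts. -/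
def supAvgVisit (X : ℕ → Ω → 𝒳) (𝒯 : Ω → Set ℕ) (A : Set 𝒳) (T₀ : ℕ) (ω : Ω) : ℝ :=
  ⨆ T : {T : ℕ // T₀ ≤ T}, avgVisit X 𝒯 A T ω

/-- Number of sets `A k` visited by the process up to time `T`. -/
def distinctSetCount (X : ℕ → Ω → 𝒳) (A : ℕ → Set 𝒳) (T : ℕ) (ω : Ω) : ℕ :=
  Set.ncard {k : ℕ | ∃ t, 1 ≤ t ∧ t ≤ T ∧ X t ω ∈ A k}

/-- Condition C2. -/
def SatisfiesC2 (P : Measure Ω) (X : ℕ → Ω → 𝒳) : Prop :=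
  ∀ A : ℕ → Set 𝒳, (∀ k, MeasurableSet (A k)) → Pairwise (Function.onFun Disjoint A) →
    ∀ᵐ ω ∂P, Filter.Tendsto (fun T => (distinctSetCount X A T ω : ℝ) / T)
      Filter.atTop (nhds 0)

/-- Condition C5. -/
def SatisfiesC5 (P : Measure Ω) (X : ℕ → Ω → 𝒳) : Prop :=
  ∃ Ti : ℕ → ℕ, Monotone Ti ∧
    SatisfiesC1 P X (fun ω => ⋃ i, scaleTimes X i ω ∩ {t : ℕ | Ti i ≤ t})

/-- `N_t(x) = Σ_{1 ≤ s ≤ t} 1[X_s = x]`, the occurrence count. -/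
def dupCount (X : ℕ → Ω → 𝒳) (t : ℕ) (x : 𝒳) (ω : Ω) : ℕ :=
  Set.ncard {s : ℕ | 1 ≤ s ∧ s ≤ t ∧ X s ω = x}

/-- Condition C8. -/
def SatisfiesC8 (P : Measure Ω) (X : ℕ → Ω → 𝒳) : Prop :=
  ∃ Ψ : ℕ → ℕ, Monotone Ψ ∧ Filter.Tendsto Ψ Filter.atTop Filter.atTop ∧
    ∀ A : ℕ → Set 𝒳, (∀ i, MeasurableSet (A i)) → Antitone A → (⋂ i, A i) = ∅ →
      Filter.Tendsto (fun i => ∫ ω, Filter.limsup (fun T : ℕ => (T : ℝ)⁻¹ *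
          ∑ t ∈ Finset.Icc 1 T,
            ({s : ℕ | X s ω ∈ A i ∧ dupCount X s (X s ω) ω ≤ Ψ T}.indicator
              (fun _ => (1 : ℝ)) t)) Filter.atTop ∂P)
        Filter.atTop (nhds 0)

/-!
If the claim failed for some `ε`, there would be sets `A k` with `E[μ̂(A k)] ≤ 2⁻ᵏ` but
`E[sup_{T ≥ k+1} avgVisit_T(A k)] > ε`. Condition C1 makes `A ↦ E[μ̂(A)]` countably subadditive, so
the tails `B m = ⋃_{k ≥ m} A k` satisfy `E[μ̂(B m)] ≤ 2¹⁻ᵐ`. On the other hand `A k ⊆ B m` for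
`k ≥ m`, and `E[sup_{T ≥ T₀} avgVisit_T(B m)] → E[μ̂(B m)]` by dominated convergence, so
`E[μ̂(B m)] ≥ ε` for every `m`: a contradiction.
-/

section Pointwise

omit [MeasurableSpace Ω] [MeasurableSpace 𝒳]

variable {X : ℕ → Ω → 𝒳} {𝒯 : Ω → Set ℕ}

lemma avgVisit_nonneg (A : Set 𝒳) (T : ℕ) (ω : Ω) : 0 ≤ avgVisit X 𝒯 A T ω :=
  mul_nonneg (by positivity)
    (Finset.sum_nonneg fun _ _ => indicator_nonneg (fun _ _ => zero_le_one) _)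

lemma avgVisit_le_one (A : Set 𝒳) (T : ℕ) (ω : Ω) : avgVisit X 𝒯 A T ω ≤ 1 := by
  refine inv_mul_le_one_of_le₀ ?_ (Nat.cast_nonneg T)
  calc _ ≤ ∑ _t ∈ Finset.Icc 1 T, (1 : ℝ) :=
        Finset.sum_le_sum fun _ _ => indicator_le_self' (fun _ _ => zero_le_one) _
    _ = T := by simp

lemma avgVisit_mono {A B : Set 𝒳} (h : A ⊆ B) (T : ℕ) (ω : Ω) :
    avgVisit X 𝒯 A T ω ≤ avgVisit X 𝒯 B T ω := by
  unfold avgVisit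
  gcongr

lemma avgVisit_union_le (A B : Set 𝒳) (T : ℕ) (ω : Ω) :
    avgVisit X 𝒯 (A ∪ B) T ω ≤ avgVisit X 𝒯 A T ω + avgVisit X 𝒯 B T ω := by
  rw [avgVisit, avgVisit, avgVisit, ← mul_add, ← Finset.sum_add_distrib]
  refine mul_le_mul_of_nonneg_left (Finset.sum_le_sum fun t _ => ?_) (by positivity)
  classical
  simp only [indicator_apply, mem_ofPred_eq, mem_union]
  split_ifs <;> grind

lemma avgVisit_le_supAvgVisit (A : Set 𝒳) {T₀ T : ℕ} (h : T₀ ≤ T) (ω : Ω) :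
    avgVisit X 𝒯 A T ω ≤ supAvgVisit X 𝒯 A T₀ ω :=
  le_ciSup (f := fun T : {T // T₀ ≤ T} => avgVisit X 𝒯 A T ω)
    (bddAbove_def.2 ⟨1, by rintro _ ⟨T, rfl⟩; exact avgVisit_le_one A T ω⟩) ⟨T, h⟩

lemma supAvgVisit_le {A : Set 𝒳} {T₀ : ℕ} {ω : Ω} {c : ℝ}
    (h : ∀ T, T₀ ≤ T → avgVisit X 𝒯 A T ω ≤ c) : supAvgVisit X 𝒯 A T₀ ω ≤ c :=
  haveI : Nonempty {T // T₀ ≤ T} := ⟨⟨T₀, le_rfl⟩⟩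
  ciSup_le fun T => h T T.2

lemma supAvgVisit_nonneg (A : Set 𝒳) (T₀ : ℕ) (ω : Ω) : 0 ≤ supAvgVisit X 𝒯 A T₀ ω :=
  (avgVisit_nonneg A T₀ ω).trans (avgVisit_le_supAvgVisit A le_rfl ω)

lemma norm_supAvgVisit_le_one (A : Set 𝒳) (T₀ : ℕ) (ω : Ω) : ‖supAvgVisit X 𝒯 A T₀ ω‖ ≤ 1 := by
  rw [Real.norm_of_nonneg (supAvgVisit_nonneg A T₀ ω)]
  exact supAvgVisit_le fun T _ => avgVisit_le_one A T ω

lemma supAvgVisit_antitone (A : Set 𝒳) (ω : Ω) : Antitone fun T₀ => supAvgVisit X 𝒯 A T₀ ω :=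
  fun _ _ h => supAvgVisit_le fun _ hT => avgVisit_le_supAvgVisit A (h.trans hT) ω

lemma supAvgVisit_mono {A B : Set 𝒳} (h : A ⊆ B) (T₀ : ℕ) (ω : Ω) :
    supAvgVisit X 𝒯 A T₀ ω ≤ supAvgVisit X 𝒯 B T₀ ω :=
  supAvgVisit_le fun _ hT => (avgVisit_mono h _ ω).trans (avgVisit_le_supAvgVisit B hT ω)

lemma supAvgVisit_union_le (A B : Set 𝒳) (T₀ : ℕ) (ω : Ω) :
    supAvgVisit X 𝒯 (A ∪ B) T₀ ω ≤ supAvgVisit X 𝒯 A T₀ ω + supAvgVisit X 𝒯 B T₀ ω :=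
  supAvgVisit_le fun _ hT => (avgVisit_union_le A B _ ω).trans
    (add_le_add (avgVisit_le_supAvgVisit A hT ω) (avgVisit_le_supAvgVisit B hT ω))

lemma limitSubmeasure_eq_iInf_supAvgVisit (A : Set 𝒳) (ω : Ω) :
    limitSubmeasure X 𝒯 A ω = ⨅ T₀ : ℕ, supAvgVisit X 𝒯 A T₀ ω := by
  have hbdd : BddBelow (range fun T₀ => supAvgVisit X 𝒯 A T₀ ω) :=
    ⟨0, by rintro _ ⟨T₀, rfl⟩; exact supAvgVisit_nonneg A T₀ ω⟩
  apply le_antisymm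
  · refine le_ciInf fun T₀ => limsup_le_of_le
      (isBoundedUnder_of ⟨0, fun T => avgVisit_nonneg A T ω⟩).isCoboundedUnder_le ?_
    filter_upwards [eventually_ge_atTop T₀] with T hT using avgVisit_le_supAvgVisit A hT ω
  · rw [limitSubmeasure, limsup_eq]
    refine le_csInf ⟨1, .of_forall fun T => avgVisit_le_one A T ω⟩ fun c hc => ?_
    obtain ⟨T₀, hT₀⟩ := eventually_atTop.1 hc
    exact (ciInf_le hbdd T₀).trans (supAvgVisit_le hT₀)

lemma tendsto_supAvgVisit (A : Set 𝒳) (ω : Ω) :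
    Tendsto (fun T₀ => supAvgVisit X 𝒯 A T₀ ω) atTop (𝓝 (limitSubmeasure X 𝒯 A ω)) := by
  rw [limitSubmeasure_eq_iInf_supAvgVisit]
  exact tendsto_atTop_ciInf (supAvgVisit_antitone A ω)
    ⟨0, by rintro _ ⟨T₀, rfl⟩; exact supAvgVisit_nonneg A T₀ ω⟩

lemma norm_limitSubmeasure_le_one (A : Set 𝒳) (ω : Ω) : ‖limitSubmeasure X 𝒯 A ω‖ ≤ 1 :=
  le_of_tendsto' (tendsto_supAvgVisit A ω).norm fun T₀ => norm_supAvgVisit_le_one A T₀ ω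

lemma limitSubmeasure_nonneg (A : Set 𝒳) (ω : Ω) : 0 ≤ limitSubmeasure X 𝒯 A ω :=
  ge_of_tendsto' (tendsto_supAvgVisit A ω) fun T₀ => supAvgVisit_nonneg A T₀ ω

lemma limitSubmeasure_union_le (A B : Set 𝒳) (ω : Ω) :
    limitSubmeasure X 𝒯 (A ∪ B) ω ≤ limitSubmeasure X 𝒯 A ω + limitSubmeasure X 𝒯 B ω :=
  le_of_tendsto_of_tendsto' (tendsto_supAvgVisit _ ω)
    ((tendsto_supAvgVisit A ω).add (tendsto_supAvgVisit B ω))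
    fun T₀ => supAvgVisit_union_le A B T₀ ω

lemma limitSubmeasure_empty (ω : Ω) : limitSubmeasure X 𝒯 ∅ ω = 0 := by
  simp [limitSubmeasure, avgVisit]

end Pointwise

section Expectation

variable {X : ℕ → Ω → 𝒳} {𝒯 : Ω → Set ℕ} {P : Measure Ω} [IsProbabilityMeasure P]

lemma measurable_avgVisit (hX : ∀ t, Measurable (X t)) (h𝒯 : ∀ t, MeasurableSet {ω | t ∈ 𝒯 ω})
    {A : Set 𝒳} (hA : MeasurableSet A) (T : ℕ) : Measurable (avgVisit X 𝒯 A T) := by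
  classical
  refine (Finset.measurable_sum _ fun t _ => ?_).const_mul _
  simp only [indicator_apply, mem_ofPred_eq]
  exact Measurable.ite ((h𝒯 t).inter (hX t hA)) measurable_const measurable_const

lemma measurable_supAvgVisit (hX : ∀ t, Measurable (X t))
    (h𝒯 : ∀ t, MeasurableSet {ω | t ∈ 𝒯 ω}) {A : Set 𝒳} (hA : MeasurableSet A) (T₀ : ℕ) :
    Measurable (supAvgVisit X 𝒯 A T₀) :=
  Measurable.iSup fun T => measurable_avgVisit hX h𝒯 hA T.1

lemma integrable_supAvgVisit (hX : ∀ t, Measurable (X t))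
    (h𝒯 : ∀ t, MeasurableSet {ω | t ∈ 𝒯 ω}) {A : Set 𝒳} (hA : MeasurableSet A) (T₀ : ℕ) :
    Integrable (supAvgVisit X 𝒯 A T₀) P :=
  .of_bound (measurable_supAvgVisit hX h𝒯 hA T₀).aestronglyMeasurable 1
    (.of_forall (norm_supAvgVisit_le_one A T₀))

lemma integrable_limitSubmeasure (hX : ∀ t, Measurable (X t))
    (h𝒯 : ∀ t, MeasurableSet {ω | t ∈ 𝒯 ω}) {A : Set 𝒳} (hA : MeasurableSet A) :
    Integrable (limitSubmeasure X 𝒯 A) P :=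
  .of_bound (Measurable.limsup (measurable_avgVisit hX h𝒯 hA)).aestronglyMeasurable 1
    (.of_forall (norm_limitSubmeasure_le_one A))

lemma tendsto_integral_supAvgVisit (hX : ∀ t, Measurable (X t))
    (h𝒯 : ∀ t, MeasurableSet {ω | t ∈ 𝒯 ω}) {A : Set 𝒳} (hA : MeasurableSet A) :
    Tendsto (fun T₀ => ∫ ω, supAvgVisit X 𝒯 A T₀ ω ∂P) atTop
      (𝓝 (∫ ω, limitSubmeasure X 𝒯 A ω ∂P)) :=
  tendsto_integral_of_dominated_convergence 1
    (fun T₀ => (integrable_supAvgVisit hX h𝒯 hA T₀).aestronglyMeasurable) (integrable_const 1)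
    (fun T₀ => .of_forall (norm_supAvgVisit_le_one A T₀))
    (.of_forall (tendsto_supAvgVisit A))

lemma integral_limitSubmeasure_union_le (hX : ∀ t, Measurable (X t))
    (h𝒯 : ∀ t, MeasurableSet {ω | t ∈ 𝒯 ω}) {A B : Set 𝒳} (hA : MeasurableSet A)
    (hB : MeasurableSet B) :
    ∫ ω, limitSubmeasure X 𝒯 (A ∪ B) ω ∂P ≤
      ∫ ω, limitSubmeasure X 𝒯 A ω ∂P + ∫ ω, limitSubmeasure X 𝒯 B ω ∂P := by
  have hAi := integrable_limitSubmeasure (P := P) hX h𝒯 hA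
  have hBi := integrable_limitSubmeasure (P := P) hX h𝒯 hB
  rw [← integral_add hAi hBi]
  exact integral_mono_of_nonneg (.of_forall (limitSubmeasure_nonneg _)) (hAi.add hBi)
    (.of_forall (limitSubmeasure_union_le A B))

lemma integral_limitSubmeasure_biUnion_le (hX : ∀ t, Measurable (X t))
    (h𝒯 : ∀ t, MeasurableSet {ω | t ∈ 𝒯 ω}) {ι : Type*} [DecidableEq ι] {C : ι → Set 𝒳}
    (hC : ∀ i, MeasurableSet (C i)) (s : Finset ι) :
    ∫ ω, limitSubmeasure X 𝒯 (⋃ i ∈ s, C i) ω ∂P ≤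
      ∑ i ∈ s, ∫ ω, limitSubmeasure X 𝒯 (C i) ω ∂P := by
  induction s using Finset.induction with
  | empty => simp [limitSubmeasure_empty]
  | insert i s hi ih =>
    rw [Finset.set_biUnion_insert, Finset.sum_insert hi]
    exact (integral_limitSubmeasure_union_le hX h𝒯 (hC i)
      (s.measurableSet_biUnion fun i _ => hC i)).trans (add_le_add_right ih _)

lemma integral_limitSubmeasure_iUnion_le (hX : ∀ t, Measurable (X t))
    (h𝒯 : ∀ t, MeasurableSet {ω | t ∈ 𝒯 ω}) (hC1 : SatisfiesC1 P X 𝒯) {C : ℕ → Set 𝒳}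
    (hC : ∀ k, MeasurableSet (C k))
    (hsum : Summable fun k => ∫ ω, limitSubmeasure X 𝒯 (C k) ω ∂P) :
    ∫ ω, limitSubmeasure X 𝒯 (⋃ k, C k) ω ∂P ≤ ∑' k, ∫ ω, limitSubmeasure X 𝒯 (C k) ω ∂P := by
  set U : ℕ → Set 𝒳 := fun M => ⋃ k ∈ Finset.range M, C k
  have hU : ∀ M, MeasurableSet (U M) := fun M =>
    (Finset.range M).measurableSet_biUnion fun k _ => hC k
  have hrest : Tendsto (fun M => ∫ ω, limitSubmeasure X 𝒯 ((⋃ k, C k) \ U M) ω ∂P) atTop (𝓝 0) := by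
    refine hC1 _ (fun M => (MeasurableSet.iUnion hC).diff (hU M))
      (fun M N hMN => sdiff_subset_sdiff_right (biUnion_subset_biUnion_left ?_)) ?_
    · exact fun k hk => Finset.mem_range.2 ((Finset.mem_range.1 hk).trans_le hMN)
    · refine eq_empty_of_forall_notMem fun x hx => ?_
      obtain ⟨k, hk⟩ := mem_iUnion.1 (mem_iInter.1 hx 0).1
      exact (mem_iInter.1 hx (k + 1)).2 (mem_biUnion (Finset.self_mem_range_succ k) hk)
  refine ge_of_tendsto' (by simpa using hrest.const_add (∑' k, _)) fun M => ?_
  calc ∫ ω, limitSubmeasure X 𝒯 (⋃ k, C k) ω ∂P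
      = ∫ ω, limitSubmeasure X 𝒯 (U M ∪ ((⋃ k, C k) \ U M)) ω ∂P := by
        rw [union_sdiff_cancel (iUnion₂_subset fun k _ => subset_iUnion C k)]
    _ ≤ ∫ ω, limitSubmeasure X 𝒯 (U M) ω ∂P
          + ∫ ω, limitSubmeasure X 𝒯 ((⋃ k, C k) \ U M) ω ∂P :=
        integral_limitSubmeasure_union_le hX h𝒯 (hU M) ((MeasurableSet.iUnion hC).diff (hU M))
    _ ≤ ∑' k, ∫ ω, limitSubmeasure X 𝒯 (C k) ω ∂P
          + ∫ ω, limitSubmeasure X 𝒯 ((⋃ k, C k) \ U M) ω ∂P := by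
        gcongr
        exact (integral_limitSubmeasure_biUnion_le hX h𝒯 hC _).trans
          (hsum.sum_le_tsum _ fun k _ => integral_nonneg (limitSubmeasure_nonneg _))

lemma le_integral_limitSubmeasure_of_le_integral_supAvgVisit (hX : ∀ t, Measurable (X t))
    (h𝒯 : ∀ t, MeasurableSet {ω | t ∈ 𝒯 ω}) {A : ℕ → Set 𝒳} {B : Set 𝒳} (hB : MeasurableSet B)
    {T : ℕ → ℕ} (hT : Tendsto T atTop atTop) (hAB : ∀ᶠ k in atTop, A k ⊆ B) {c : ℝ}
    (hc : ∀ᶠ k in atTop, c ≤ ∫ ω, supAvgVisit X 𝒯 (A k) (T k) ω ∂P) :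
    c ≤ ∫ ω, limitSubmeasure X 𝒯 B ω ∂P := by
  refine ge_of_tendsto ((tendsto_integral_supAvgVisit hX h𝒯 hB).comp hT) ?_
  filter_upwards [hAB, hc] with k hk hck
  exact hck.trans <| integral_mono_of_nonneg (.of_forall (supAvgVisit_nonneg _ _))
    (integrable_supAvgVisit hX h𝒯 hB _) (.of_forall (supAvgVisit_mono hk _))

end Expectation

theorem stmt0_general
    (P : Measure Ω) [IsProbabilityMeasure P]
    (X : ℕ → Ω → 𝒳) (hX : ∀ t, Measurable (X t))
    (𝒯 : Ω → Set ℕ) (h𝒯 : ∀ t, MeasurableSet {ω | t ∈ 𝒯 ω})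
    (hC1 : SatisfiesC1 P X 𝒯) :
    ∀ ε : ℝ, 0 < ε → ∃ Tε : ℕ, 1 ≤ Tε ∧ ∃ δ : ℝ, 0 < δ ∧
      ∀ A : Set 𝒳, MeasurableSet A →
        (∫ ω, limitSubmeasure X 𝒯 A ω ∂P) ≤ δ →
        (∫ ω, supAvgVisit X 𝒯 A Tε ω ∂P) ≤ ε := by
  intro ε hε
  by_contra! h
  choose A hA hAδ hAε using
    fun k : ℕ => h (k + 1) (Nat.le_add_left 1 k) ((1 / 2) ^ k) (by positivity)
  have hgeom : Summable fun k : ℕ => (1 / 2 : ℝ) ^ k := summable_geometric_two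
  have hbound : ∀ m, ε ≤ 2 * (1 / 2) ^ m := fun m => by
    have hAδ' : ∀ k, ∫ ω, limitSubmeasure X 𝒯 (A (m + k)) ω ∂P ≤ (1 / 2) ^ m * (1 / 2) ^ k :=
      fun k => pow_add (1 / 2 : ℝ) m k ▸ hAδ (m + k)
    have hsum := (hgeom.mul_left ((1 / 2) ^ m)).of_nonneg_of_le
      (fun k => integral_nonneg (limitSubmeasure_nonneg _)) hAδ'
    calc ε ≤ ∫ ω, limitSubmeasure X 𝒯 (⋃ k, A (m + k)) ω ∂P := by
          refine le_integral_limitSubmeasure_of_le_integral_supAvgVisit hX h𝒯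
            (.iUnion fun k => hA (m + k)) (tendsto_add_atTop_nat 1) ?_
            (.of_forall fun k => (hAε k).le)
          filter_upwards [eventually_ge_atTop m] with k hk
          simpa [Nat.add_sub_cancel' hk] using subset_iUnion (fun j => A (m + j)) (k - m)
      _ ≤ ∑' k, ∫ ω, limitSubmeasure X 𝒯 (A (m + k)) ω ∂P :=
          integral_limitSubmeasure_iUnion_le hX h𝒯 hC1 (fun k => hA (m + k)) hsum
      _ ≤ ∑' k, (1 / 2) ^ m * (1 / 2 : ℝ) ^ k := hsum.tsum_le_tsum hAδ' (hgeom.mul_left _)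
      _ = 2 * (1 / 2) ^ m := by rw [tsum_mul_left, tsum_geometric_two, mul_comm]
  have hlim : Tendsto (fun m => 2 * (1 / 2 : ℝ) ^ m) atTop (𝓝 0) := by
    simpa using (tendsto_pow_atTop_nhds_zero_of_lt_one (r := (1 / 2 : ℝ)) (by norm_num)
      (by norm_num)).const_mul 2
  exact hε.not_ge (ge_of_tendsto' hlim hbound)

/-- uniform deviations for C1 extended processes
(Lemma `uniform_deviations`). -/
theorem stmt0 [TopologicalSpace 𝒳] [TopologicalSpace.SeparableSpace 𝒳]
    [TopologicalSpace.MetrizableSpace 𝒳] [BorelSpace 𝒳]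
    (P : Measure Ω) [IsProbabilityMeasure P]
    (X : ℕ → Ω → 𝒳) (hX : ∀ t, Measurable (X t))
    (𝒯 : Ω → Set ℕ) (h𝒯 : ∀ t, MeasurableSet {ω | t ∈ 𝒯 ω})
    (hC1 : SatisfiesC1 P X 𝒯) :
    ∀ ε : ℝ, 0 < ε → ∃ Tε : ℕ, 1 ≤ Tε ∧ ∃ δ : ℝ, 0 < δ ∧
      ∀ A : Set 𝒳, MeasurableSet A →
        (∫ ω, limitSubmeasure X 𝒯 A ω ∂P) ≤ δ →
        (∫ ω, supAvgVisit X 𝒯 A Tε ω ∂P) ≤ ε :=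
  stmt0_general P X hX 𝒯 h𝒯 hC1
end
end

section
/- Let 𝒳 be a separable metrizable space with its Borel σ-algebra. Every stochastic process on 𝒳 satisfying condition C8 also satisfies condition C5. -/
/-!
Choose activation times `T_i` so that, once all scales `i ≤ I` are active at time `T`, the
threshold `Ψ T` is at least `2^(I+1) (I+2)`. Among the times of `𝒯` in `(T / 2^I, T]`, each
value of the process occurs at most once per period, and these times meet at most
`2^(I+1) (I+2)` periods of the scales `i ≤ I`; so each value occurs at most `Ψ T` times there.
Matching the `r`-th such occurrence of a value with its `r`-th occurrence overall, whose
duplicate count is `r ≤ Ψ T`, bounds the visits of `𝒯` to `A` up to `T` by `T / 2^I` plus the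
number of `t ≤ T` counted in condition C8. Dividing by `T` and letting `T → ∞` bounds `μ̂_𝒯(A)`
pointwise by the C8 quantity, and C1 follows by integrating.
-/

open MeasureTheory Filter Set Topology

noncomputable section

variable {Ω : Type*} [MeasurableSpace Ω] {𝒳 : Type*} [MeasurableSpace 𝒳]

lemma two_pow_le_timeGrid (i k : ℕ) : 2 ^ (k / 2 ^ i) ≤ timeGrid i k := by
  rw [timeGrid, Nat.le_floor_iff (by positivity)]
  push_cast
  exact le_mul_of_one_le_right (by positivity) (le_add_of_nonneg_right (by positivity))

lemma timeGrid_lt_two_pow (i k : ℕ) : timeGrid i k < 2 ^ (k / 2 ^ i + 1) := by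
  rw [timeGrid, Nat.floor_lt (by positivity)]
  have hv : ((k % 2 ^ i : ℕ) : ℝ) / 2 ^ i < 1 := by
    rw [div_lt_one (by positivity)]
    exact_mod_cast Nat.mod_lt k (Nat.two_pow_pos i)
  push_cast
  rw [pow_succ]
  gcongr
  linarith

lemma timeGrid_zero (i : ℕ) : timeGrid i 0 = 1 := by simp [timeGrid]

lemma exists_lt_timeGrid_succ (i t : ℕ) : ∃ k, t < timeGrid i (k + 1) := by
  refine ⟨2 ^ i * t, ?_⟩
  have ht : t ≤ (2 ^ i * t + 1) / 2 ^ i :=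
    (Nat.le_div_iff_mul_le (Nat.two_pow_pos i)).2 (by rw [mul_comm]; omega)
  calc t < 2 ^ t := Nat.lt_two_pow_self
    _ ≤ 2 ^ ((2 ^ i * t + 1) / 2 ^ i) := Nat.pow_le_pow_right two_pos ht
    _ ≤ timeGrid i (2 ^ i * t + 1) := two_pow_le_timeGrid i _

/-- The index `k` of the period `[T_i^k, T_i^{k+1})` containing `t`. -/
def periodOf (i t : ℕ) : ℕ := Nat.find (exists_lt_timeGrid_succ i t)

lemma lt_timeGrid_periodOf_succ (i t : ℕ) : t < timeGrid i (periodOf i t + 1) :=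
  Nat.find_spec (exists_lt_timeGrid_succ i t)

lemma timeGrid_periodOf_le {i t : ℕ} (ht : 1 ≤ t) : timeGrid i (periodOf i t) ≤ t := by
  rcases h : periodOf i t with _ | k
  · rwa [timeGrid_zero]
  · have := Nat.find_min (exists_lt_timeGrid_succ i t) (h ▸ k.lt_succ_self : k < periodOf i t)
    omega

/-- A time in `(T / 2^I, T]` lies in one of the last `I + 2` dyadic blocks of periods below `T`. -/
lemma periodOf_mem_Ico {i t T I : ℕ} (hlow : T / 2 ^ I < t) (htT : t ≤ T) :
    periodOf i t ∈ Finset.Ico (2 ^ i * (Nat.log 2 T - (I + 1))) (2 ^ i * (Nat.log 2 T + 1)) := by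
  set k := periodOf i t
  set u := k / 2 ^ i
  have hpos : 0 < 2 ^ i := Nat.two_pow_pos i
  have ht1 : 1 ≤ t := (Nat.zero_le _).trans_lt hlow
  have huL : u ≤ Nat.log 2 T := Nat.le_log_of_pow_le one_lt_two
    ((two_pow_le_timeGrid i k).trans ((timeGrid_periodOf_le ht1).trans htT))
  have hLu : Nat.log 2 T < u + I + 2 := by
    have hsucc : (k + 1) / 2 ^ i ≤ u + 1 :=
      (Nat.div_le_div_right (Nat.add_le_add_left hpos k)).trans_eq (Nat.add_div_right k hpos)
    have ht : t < 2 ^ (u + 2) := calc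
      t < timeGrid i (k + 1) := lt_timeGrid_periodOf_succ i t
      _ < 2 ^ ((k + 1) / 2 ^ i + 1) := timeGrid_lt_two_pow i _
      _ ≤ 2 ^ (u + 2) := Nat.pow_le_pow_right two_pos (Nat.succ_le_succ hsucc)
    have hT : 2 ^ Nat.log 2 T < 2 ^ (u + I + 2) := calc
      2 ^ Nat.log 2 T ≤ T := Nat.pow_log_le_self 2 (by omega)
      _ < 2 ^ I * (T / 2 ^ I + 1) := Nat.lt_mul_div_succ T (Nat.two_pow_pos I)
      _ ≤ 2 ^ I * t := Nat.mul_le_mul_left _ hlow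
      _ < 2 ^ I * 2 ^ (u + 2) := Nat.mul_lt_mul_of_pos_left ht (Nat.two_pow_pos I)
      _ = 2 ^ (u + I + 2) := by ring
    exact (Nat.pow_lt_pow_iff_right (by norm_num)).1 hT
  have hku : 2 ^ i * u ≤ k := Nat.mul_div_le k (2 ^ i)
  have hk : k < 2 ^ i * (u + 1) := Nat.lt_mul_div_succ k hpos
  clear_value u
  rw [Finset.mem_Ico]
  constructor
  · exact (Nat.mul_le_mul_left _ (by omega)).trans hku
  · exact hk.trans_le (Nat.mul_le_mul_left _ (by omega))

section Counting

open scoped Classical Finset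

variable {Ω 𝒳 : Type*}

/-- The set `𝒯` of condition C5 for the activation times `Ti`. -/
def extendedTimes (X : ℕ → Ω → 𝒳) (Ti : ℕ → ℕ) (ω : Ω) : Set ℕ :=
  ⋃ i, scaleTimes X i ω ∩ {t : ℕ | Ti i ≤ t}

lemma eq_of_mem_scaleTimes {X : ℕ → Ω → 𝒳} {ω : Ω} {i t₁ t₂ : ℕ}
    (h₁ : t₁ ∈ scaleTimes X i ω) (h₂ : t₂ ∈ scaleTimes X i ω) (hX : X t₁ ω = X t₂ ω)
    (hperiod : periodOf i t₁ = periodOf i t₂) : t₁ = t₂ := by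
  wlog hle : t₁ ≤ t₂ generalizing t₁ t₂
  · exact (this h₂ h₁ hX.symm hperiod.symm (by omega)).symm
  by_contra hne
  exact h₂.2 (periodOf i t₂) (timeGrid_periodOf_le h₂.1) (lt_timeGrid_periodOf_succ i t₂) t₁
    (hperiod ▸ timeGrid_periodOf_le h₁.1) (by omega) hX

lemma card_scaleTimes_fiber_le (X : ℕ → Ω → 𝒳) (ω : Ω) (x : 𝒳) (i T I : ℕ) :
    #{t ∈ Finset.Ioc (T / 2 ^ I) T | t ∈ scaleTimes X i ω ∧ X t ω = x} ≤ 2 ^ i * (I + 2) := by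
  calc _ ≤ #(Finset.Ico (2 ^ i * (Nat.log 2 T - (I + 1))) (2 ^ i * (Nat.log 2 T + 1))) := by
        refine Finset.card_le_card_of_injOn (periodOf i) (fun t ht => ?_)
          (fun t₁ ht₁ t₂ ht₂ h => ?_)
        · simp only [Finset.coe_filter, Finset.mem_Ioc, Set.mem_ofPred_eq] at ht
          exact periodOf_mem_Ico ht.1.1 ht.1.2
        · simp only [Finset.coe_filter, Set.mem_ofPred_eq] at ht₁ ht₂
          exact eq_of_mem_scaleTimes ht₁.2.1 ht₂.2.1 (ht₁.2.2.trans ht₂.2.2.symm) h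
    _ = 2 ^ i * (Nat.log 2 T + 1) - 2 ^ i * (Nat.log 2 T - (I + 1)) := Nat.card_Ico _ _
    _ ≤ 2 ^ i * (I + 2) := by
        rw [← Nat.mul_sub]
        exact Nat.mul_le_mul_left _ (by omega)

lemma card_extendedTimes_fiber_le (X : ℕ → Ω → 𝒳) (Ti : ℕ → ℕ) (ω : Ω) (x : 𝒳) {T I : ℕ}
    (hI : ∀ i, Ti i ≤ T → i ≤ I) :
    #{t ∈ Finset.Ioc (T / 2 ^ I) T | t ∈ extendedTimes X Ti ω ∧ X t ω = x}
      ≤ 2 ^ (I + 1) * (I + 2) := by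
  calc _ ≤ #((Finset.range (I + 1)).biUnion fun i =>
          {t ∈ Finset.Ioc (T / 2 ^ I) T | t ∈ scaleTimes X i ω ∧ X t ω = x}) := by
        refine Finset.card_le_card fun t ht => ?_
        simp only [extendedTimes, Finset.mem_filter, Finset.mem_Ioc, Set.mem_iUnion,
          Set.mem_inter_iff, Set.mem_ofPred_eq] at ht
        obtain ⟨⟨hlow, htT⟩, ⟨i, hi, hTi⟩, hx⟩ := ht
        simp only [Finset.mem_biUnion, Finset.mem_range, Finset.mem_filter, Finset.mem_Ioc]
        exact ⟨i, Nat.lt_succ_of_le (hI i (hTi.trans htT)), ⟨hlow, htT⟩, hi, hx⟩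
    _ ≤ ∑ i ∈ Finset.range (I + 1), 2 ^ i * (I + 2) :=
        Finset.card_biUnion_le.trans
          (Finset.sum_le_sum fun i _ => card_scaleTimes_fiber_le X ω x i T I)
    _ = (∑ i ∈ Finset.range (I + 1), 2 ^ i) * (I + 2) := (Finset.sum_mul _ _ _).symm
    _ ≤ 2 ^ (I + 1) * (I + 2) :=
        Nat.mul_le_mul_right _ (Nat.geomSum_lt le_rfl fun _ => Finset.mem_range.1).le

lemma min_card_le_card_filter_rank_le {α : Type*} [LinearOrder α] (F : Finset α) (m : ℕ) :
    min #F m ≤ #{t ∈ F | #{s ∈ F | s ≤ t} ≤ m} := by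
  induction F using Finset.induction_on_max with
  | empty => simp
  | insert b F hlt ih =>
    have hb : b ∉ F := fun h => lt_irrefl b (hlt b h)
    have hrank : ∀ t ∈ F, {s ∈ insert b F | s ≤ t} = {s ∈ F | s ≤ t} := fun t ht => by
      rw [Finset.filter_insert, if_neg (not_le.2 (hlt t ht))]
    have hrank_b : {s ∈ insert b F | s ≤ b} = insert b F :=
      Finset.filter_true_of_mem fun s hs => by
        rcases Finset.mem_insert.1 hs with rfl | hs
        exacts [le_rfl, (hlt s hs).le]
    rw [Finset.filter_insert, hrank_b, Finset.card_insert_of_notMem hb,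
      Finset.filter_congr fun t ht => by rw [hrank t ht]]
    split_ifs with hm
    · rw [Finset.card_insert_of_notMem (by simp [hb])]
      omega
    · omega

lemma dupCount_eq_card (X : ℕ → Ω → 𝒳) (t : ℕ) (x : 𝒳) (ω : Ω) :
    dupCount X t x ω = #{s ∈ Finset.Icc 1 t | X s ω = x} := by
  rw [dupCount, ← Set.ncard_coe_finset]
  congr
  ext s
  simp [and_assoc]

/-- Fiberwise: a value taken `r ≤ m` times on `S ⊆ [1, T]` is taken at least `r` times in
`[1, T]` at times where its running count is still at most `m`. -/
lemma card_le_card_filter_rank_le {β : Type*} (f : ℕ → β) {S : Finset ℕ} {T m : ℕ}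
    (hS : S ⊆ Finset.Icc 1 T) (hfib : ∀ x, #{t ∈ S | f t = x} ≤ m) :
    #S ≤ #{t ∈ Finset.Icc 1 T | f t ∈ S.image f ∧ #{s ∈ Finset.Icc 1 t | f s = f t} ≤ m} := by
  rw [Finset.card_eq_sum_card_image f S, Finset.card_eq_sum_card_fiberwise (t := S.image f)
    fun t ht => (Finset.mem_filter.1 ht).2.1]
  refine Finset.sum_le_sum fun x hx => ?_
  set F := {t ∈ Finset.Icc 1 T | f t = x}
  have hrank : ∀ t ∈ F, {s ∈ F | s ≤ t} = {s ∈ Finset.Icc 1 t | f s = f t} := fun t ht => by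
    simp only [F, Finset.mem_filter, Finset.mem_Icc] at ht
    ext s
    simp only [F, Finset.mem_filter, Finset.mem_Icc, ht.2]
    constructor
    · rintro ⟨⟨⟨hs1, -⟩, hsx⟩, hst⟩
      exact ⟨⟨hs1, hst⟩, hsx⟩
    · rintro ⟨⟨hs1, hst⟩, hsx⟩
      exact ⟨⟨⟨hs1, hst.trans ht.1.2⟩, hsx⟩, hst⟩
  calc #{t ∈ S | f t = x} ≤ min #F m :=
        le_min (Finset.card_le_card (Finset.filter_subset_filter _ hS)) (hfib x)
    _ ≤ #{t ∈ F | #{s ∈ F | s ≤ t} ≤ m} := min_card_le_card_filter_rank_le F m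
    _ = _ := by
        rw [Finset.filter_filter, Finset.filter_filter]
        refine congrArg Finset.card (Finset.filter_congr fun t ht => ?_)
        have htF : f t = x → t ∈ F := fun hfx => Finset.mem_filter.2 ⟨ht, hfx⟩
        constructor
        · rintro ⟨hfx, hrk⟩
          exact ⟨⟨hfx ▸ hx, hrank t (htF hfx) ▸ hrk⟩, hfx⟩
        · rintro ⟨⟨-, hrk⟩, hfx⟩
          exact ⟨hfx, (hrank t (htF hfx)).symm ▸ hrk⟩

lemma card_extendedTimes_visits_le (X : ℕ → Ω → 𝒳) (Ti : ℕ → ℕ) (ω : Ω) (A : Set 𝒳)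
    {T I m : ℕ} (hI : ∀ i, Ti i ≤ T → i ≤ I) (hm : 2 ^ (I + 1) * (I + 2) ≤ m) :
    #{t ∈ Finset.Icc 1 T | t ∈ extendedTimes X Ti ω ∧ X t ω ∈ A}
      ≤ T / 2 ^ I + #{t ∈ Finset.Icc 1 T | X t ω ∈ A ∧ dupCount X t (X t ω) ω ≤ m} := by
  have hfib : ∀ x, #{t ∈ Finset.Ioc (T / 2 ^ I) T | t ∈ extendedTimes X Ti ω ∧ X t ω = x} ≤ m :=
    fun x => (card_extendedTimes_fiber_le X Ti ω x hI).trans hm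
  generalize T / 2 ^ I = a at hfib ⊢
  set S := {t ∈ Finset.Ioc a T | t ∈ extendedTimes X Ti ω ∧ X t ω ∈ A}
  have hsplit : #{t ∈ Finset.Icc 1 T | t ∈ extendedTimes X Ti ω ∧ X t ω ∈ A}
      ≤ a + #S := by
    calc _ ≤ #(Finset.Icc 1 a ∪ S) := Finset.card_le_card fun t ht => by
          simp only [S, Finset.mem_union, Finset.mem_filter, Finset.mem_Icc, Finset.mem_Ioc] at ht ⊢
          by_cases hta : t ≤ a
          · exact Or.inl ⟨ht.1.1, hta⟩
          · exact Or.inr ⟨⟨by omega, ht.1.2⟩, ht.2⟩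
      _ ≤ a + #S := (Finset.card_union_le _ _).trans_eq (by rw [Nat.card_Icc, Nat.add_sub_cancel])
  have hS : #S ≤ #{t ∈ Finset.Icc 1 T | X t ω ∈ A ∧ dupCount X t (X t ω) ω ≤ m} := by
    refine (card_le_card_filter_rank_le (X · ω) (S := S) (T := T) (m := m) ?_ fun x => ?_).trans
      (Finset.card_le_card fun t ht => ?_)
    · intro t ht
      simp only [S, Finset.mem_filter, Finset.mem_Ioc, Finset.mem_Icc] at ht ⊢
      omega
    · refine le_trans (Finset.card_le_card fun t ht => ?_) (hfib x)
      simp only [S, Finset.mem_filter] at ht ⊢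
      exact ⟨ht.1.1, ht.1.2.1, ht.2⟩
    · simp only [Finset.mem_filter, Finset.mem_image, S] at ht ⊢
      obtain ⟨htT, ⟨s, hs, hsx⟩, hdup⟩ := ht
      exact ⟨htT, hsx ▸ hs.2.2, by rwa [dupCount_eq_card]⟩
  omega

end Counting

lemma exists_schedule {Ψ : ℕ → ℕ} (hΨ : Monotone Ψ) (hΨtop : Tendsto Ψ atTop atTop)
    (b : ℕ → ℕ) :
    ∃ Ti : ℕ → ℕ, Monotone Ti ∧ ∃ I : ℕ → ℕ, Tendsto I atTop atTop ∧
      (∀ i T, Ti i ≤ T → i ≤ I T) ∧ ∀ᶠ T in atTop, b (I T) ≤ Ψ T := by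
  classical
  set I : ℕ → ℕ := fun T => Nat.findGreatest (fun i => b i ≤ Ψ T) T
  have hImono : Monotone I := fun T T' h => Nat.findGreatest_mono (fun _ hi => hi.trans (hΨ h)) h
  have hIge : ∀ i, ∀ᶠ T in atTop, i ≤ I T := fun i => by
    filter_upwards [eventually_ge_atTop i, hΨtop.eventually_ge_atTop (b i)] with T hiT hbT
    exact Nat.le_findGreatest hiT hbT
  have hex : ∀ i, ∃ T, i ≤ I T := fun i => (hIge i).exists
  refine ⟨fun i => Nat.find (hex i), fun i j hij => Nat.find_mono fun T h => hij.trans h, I,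
    tendsto_atTop.2 hIge, fun i T h => (Nat.find_spec (hex i)).trans (hImono h), ?_⟩
  filter_upwards [hΨtop.eventually_ge_atTop (b 0)] with T hT
  exact Nat.findGreatest_spec (P := fun i => b i ≤ Ψ T) (Nat.zero_le T) hT

section Density

open scoped Classical Finset

variable {Ω 𝒳 : Type*}

/-- `T⁻¹ · #(B ∩ [1, T])`, written as in `avgVisit` and in condition C8. -/
def partialDensity (B : Set ℕ) (T : ℕ) : ℝ :=
  (T : ℝ)⁻¹ * ∑ t ∈ Finset.Icc 1 T, B.indicator (fun _ => (1 : ℝ)) t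

lemma partialDensity_eq_card (B : Set ℕ) (T : ℕ) :
    partialDensity B T = (T : ℝ)⁻¹ * #{t ∈ Finset.Icc 1 T | t ∈ B} := by
  rw [partialDensity, Finset.natCast_card_filter]
  simp only [Set.indicator_apply]

lemma partialDensity_nonneg (B : Set ℕ) (T : ℕ) : 0 ≤ partialDensity B T := by
  rw [partialDensity_eq_card]
  positivity

lemma partialDensity_le_one (B : Set ℕ) (T : ℕ) : partialDensity B T ≤ 1 := by
  rw [partialDensity_eq_card]
  rcases Nat.eq_zero_or_pos T with rfl | hT
  · simp
  rw [inv_mul_le_one₀ (by positivity)]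
  exact_mod_cast (Finset.card_filter_le _ _).trans (Nat.card_Icc 1 T).le

lemma isBoundedUnder_le_partialDensity (B : ℕ → Set ℕ) :
    IsBoundedUnder (· ≤ ·) atTop fun T => partialDensity (B T) T :=
  isBoundedUnder_of ⟨1, fun _ => partialDensity_le_one _ _⟩

lemma isCoboundedUnder_le_partialDensity (B : ℕ → Set ℕ) :
    IsCoboundedUnder (· ≤ ·) atTop fun T => partialDensity (B T) T :=
  (isBoundedUnder_of ⟨0, fun _ => partialDensity_nonneg _ _⟩).isCoboundedUnder_le

lemma limsup_partialDensity_nonneg (B : ℕ → Set ℕ) :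
    0 ≤ limsup (fun T => partialDensity (B T) T) atTop :=
  le_limsup_of_frequently_le (Frequently.of_forall fun _ => partialDensity_nonneg _ _)
    (isBoundedUnder_le_partialDensity B)

lemma limsup_partialDensity_le_one (B : ℕ → Set ℕ) :
    limsup (fun T => partialDensity (B T) T) atTop ≤ 1 :=
  limsup_le_of_le (isCoboundedUnder_le_partialDensity B)
    (Eventually.of_forall fun _ => partialDensity_le_one _ _)

lemma partialDensity_le_of_card_le {B C : Set ℕ} {T c : ℕ}
    (h : #{t ∈ Finset.Icc 1 T | t ∈ B} ≤ c + #{t ∈ Finset.Icc 1 T | t ∈ C}) :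
    partialDensity B T ≤ (T : ℝ)⁻¹ * c + partialDensity C T := by
  rw [partialDensity_eq_card, partialDensity_eq_card, ← mul_add]
  gcongr
  exact_mod_cast h

/-- The times counted in condition C8, for the threshold `m = Ψ T`. -/
def lowDupTimes (X : ℕ → Ω → 𝒳) (A : Set 𝒳) (m : ℕ) (ω : Ω) : Set ℕ :=
  {s | X s ω ∈ A ∧ dupCount X s (X s ω) ω ≤ m}

lemma avgVisit_extendedTimes_le (X : ℕ → Ω → 𝒳) (Ti : ℕ → ℕ) (ω : Ω) (A : Set 𝒳)
    {T I m : ℕ} (hI : ∀ i, Ti i ≤ T → i ≤ I) (hm : 2 ^ (I + 1) * (I + 2) ≤ m) :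
    avgVisit X (extendedTimes X Ti) A T ω ≤ 2⁻¹ ^ I + partialDensity (lowDupTimes X A m ω) T := by
  have hfirst : (T : ℝ)⁻¹ * (T / 2 ^ I : ℕ) ≤ 2⁻¹ ^ I := by
    rcases Nat.eq_zero_or_pos T with rfl | hT
    · simp
    calc (T : ℝ)⁻¹ * (T / 2 ^ I : ℕ) ≤ (T : ℝ)⁻¹ * (T / 2 ^ I) := by
          gcongr
          exact_mod_cast Nat.cast_div_le
      _ = 2⁻¹ ^ I := by rw [inv_pow]; field_simp
  refine (partialDensity_le_of_card_le ?_).trans (add_le_add hfirst le_rfl)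
  convert card_extendedTimes_visits_le X Ti ω A hI hm using 3
  · exact Iff.rfl
  · ext t
    simp only [Finset.mem_filter]
    exact Iff.rfl

lemma limitSubmeasure_extendedTimes_le {Ψ Ti I : ℕ → ℕ}
    (hItop : Tendsto I atTop atTop) (hTiI : ∀ i T, Ti i ≤ T → i ≤ I T)
    (hΨI : ∀ᶠ T in atTop, 2 ^ (I T + 1) * (I T + 2) ≤ Ψ T)
    (X : ℕ → Ω → 𝒳) (A : Set 𝒳) (ω : Ω) :
    limitSubmeasure X (extendedTimes X Ti) A ω
      ≤ limsup (fun T => partialDensity (lowDupTimes X A (Ψ T) ω) T) atTop := by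
  have hgeom : Tendsto (fun T => (2⁻¹ : ℝ) ^ I T) atTop (𝓝 0) :=
    (tendsto_pow_atTop_nhds_zero_of_lt_one (by norm_num) (by norm_num)).comp hItop
  calc limitSubmeasure X (extendedTimes X Ti) A ω
      ≤ limsup ((fun T => (2⁻¹ : ℝ) ^ I T) + fun T => partialDensity (lowDupTimes X A (Ψ T) ω) T)
          atTop :=
        limsup_le_limsup (hΨI.mono fun T hT => avgVisit_extendedTimes_le X Ti ω A (hTiI · T) hT)
          (isCoboundedUnder_le_partialDensity _)
          (isBoundedUnder_le_add hgeom.isBoundedUnder_le (isBoundedUnder_le_partialDensity _))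
    _ ≤ limsup (fun T => (2⁻¹ : ℝ) ^ I T) atTop
          + limsup (fun T => partialDensity (lowDupTimes X A (Ψ T) ω) T) atTop :=
        limsup_add_le hgeom.isBoundedUnder_ge hgeom.isBoundedUnder_le
          (isCoboundedUnder_le_partialDensity _) (isBoundedUnder_le_partialDensity _)
    _ = limsup (fun T => partialDensity (lowDupTimes X A (Ψ T) ω) T) atTop := by
        rw [hgeom.limsup_eq, zero_add]

end Density

section Measurability

open scoped Classical Finset

variable {Ω 𝒳 : Type*} [MeasurableSpace Ω] [MeasurableSpace 𝒳] [MeasurableEq 𝒳]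
  {X : ℕ → Ω → 𝒳}

lemma measurable_dupCount (hX : ∀ t, Measurable (X t)) (t : ℕ) :
    Measurable fun ω => dupCount X t (X t ω) ω := by
  simp_rw [dupCount_eq_card, Finset.card_filter]
  exact Finset.measurable_sum _ fun s _ =>
    Measurable.ite (measurableSet_eq_fun (hX s) (hX t)) measurable_const measurable_const

lemma measurable_limsup_partialDensity_lowDupTimes (hX : ∀ t, Measurable (X t)) {A : Set 𝒳}
    (hA : MeasurableSet A) (Ψ : ℕ → ℕ) :
    Measurable fun ω => limsup (fun T => partialDensity (lowDupTimes X A (Ψ T) ω) T) atTop := by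
  refine Measurable.limsup fun T => (Finset.measurable_sum _ fun t _ => ?_).const_mul _
  have hset : (fun ω => (lowDupTimes X A (Ψ T) ω).indicator (fun _ => (1 : ℝ)) t) =
      {ω | X t ω ∈ A ∧ dupCount X t (X t ω) ω ≤ Ψ T}.indicator fun _ => 1 := by
    ext ω
    simp [Set.indicator_apply, lowDupTimes]
  rw [hset]
  exact measurable_const.indicator ((hX t hA).inter (measurable_dupCount hX t measurableSet_Iic))

end Measurability

lemma MeasurableEq.of_separableSpace_metrizableSpace (𝒳 : Type*) [MeasurableSpace 𝒳]
    [TopologicalSpace 𝒳] [TopologicalSpace.SeparableSpace 𝒳]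
    [TopologicalSpace.MetrizableSpace 𝒳] [BorelSpace 𝒳] : MeasurableEq 𝒳 := by
  let := TopologicalSpace.metrizableSpaceMetric 𝒳
  have := UniformSpace.secondCountable_of_separable 𝒳
  infer_instance

/-- condition C8 implies condition C5. -/
theorem stmt6 [TopologicalSpace 𝒳] [TopologicalSpace.SeparableSpace 𝒳]
    [TopologicalSpace.MetrizableSpace 𝒳] [BorelSpace 𝒳]
    (P : Measure Ω) [IsProbabilityMeasure P]
    (X : ℕ → Ω → 𝒳) (hX : ∀ t, Measurable (X t))
    (hC8 : SatisfiesC8 P X) :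
    SatisfiesC5 P X := by
  have := MeasurableEq.of_separableSpace_metrizableSpace 𝒳
  obtain ⟨Ψ, hΨ, hΨtop, hC8⟩ := hC8
  obtain ⟨Ti, hTi, I, hItop, hTiI, hΨI⟩ :=
    exists_schedule hΨ hΨtop fun i => 2 ^ (i + 1) * (i + 2)
  refine ⟨Ti, hTi, fun A hA hAanti hAempty => ?_⟩
  refine squeeze_zero (fun k => integral_nonneg fun ω => limsup_partialDensity_nonneg _)
    (fun k => integral_mono_of_nonneg (ae_of_all _ fun ω => limsup_partialDensity_nonneg _) ?_
      (ae_of_all _ fun ω => limitSubmeasure_extendedTimes_le hItop hTiI hΨI X (A k) ω))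
    (hC8 A hA hAanti hAempty)
  refine .of_bound (measurable_limsup_partialDensity_lowDupTimes hX (hA k) Ψ).aestronglyMeasurable
    1 (ae_of_all _ fun ω => ?_)
  rw [Real.norm_of_nonneg (limsup_partialDensity_nonneg _)]
  exact limsup_partialDensity_le_one _
end
end

section
/- Let 𝒳 be a separable metrizable space with its Borel σ-algebra such that there does not exist a non-atomic probability measure on 𝒳. Then every stochastic process 𝕏 on 𝒳 satisfying condition C2 visits a sublinear number of distinct points: almost surely, |{x ∈ 𝒳 : x ∈ {X_1,…,X_T}}| = o(T) as T → ∞. -/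
open MeasureTheory Filter Set Topology

noncomputable section

variable {Ω : Type*} [MeasurableSpace Ω] {𝒳 : Type*} [MeasurableSpace 𝒳]

/-!
A finite measure on `𝒳` charges only its atoms: otherwise, conditioned on the complement of the
countable set of atoms, it would be a non-atomic probability measure. Hence almost surely the
whole trajectory lies in the countable set `S` of atoms of the laws of the `X t`. For an injection
`g` of `S` into `ℕ`, the fibres `S ∩ g ⁻¹' {k}` are disjoint measurable sets with at most one point
each, so the number of distinct points visited equals the number of fibres visited, which is
`o(T)` by C2.
-/

section Atoms

open ProbabilityTheory

variable {α : Type*} [MeasurableSpace α] [MeasurableSingletonClass α]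

theorem MeasureTheory.Measure.countable_setOf_measure_singleton_pos (μ : Measure α) [SFinite μ] :
    {x : α | 0 < μ {x}}.Countable :=
  Measure.countable_meas_pos_of_disjoint_iUnion measurableSet_singleton
    fun _ _ h => disjoint_singleton.2 h

theorem MeasureTheory.Measure.ae_measure_singleton_pos
    (hno : ¬ ∃ ν : Measure α, IsProbabilityMeasure ν ∧ ∀ x : α, ν {x} = 0)
    (μ : Measure α) [IsFiniteMeasure μ] :
    ∀ᵐ x ∂μ, 0 < μ {x} := by
  set S := {x : α | 0 < μ {x}}
  have hSc : MeasurableSet Sᶜ := (μ.countable_setOf_measure_singleton_pos).measurableSet.compl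
  by_contra hS
  refine hno ⟨cond μ Sᶜ, cond_isProbabilityMeasure hS, fun x => ?_⟩
  rw [cond_apply hSc]
  by_cases hx : x ∈ S
  · simp [hx]
  · have hx0 : μ {x} = 0 := by simpa [S, pos_iff_ne_zero] using hx
    simp [measure_mono_null inter_subset_right hx0]

end Atoms

theorem distinctSetCount_fibers_eq_ncard {Ω 𝒳 : Type*} {X : ℕ → Ω → 𝒳} {ω : Ω} {S : Set 𝒳}
    {g : 𝒳 → ℕ} (hg : InjOn g S) (hS : ∀ t, X t ω ∈ S) (T : ℕ) :
    distinctSetCount X (fun k => S ∩ g ⁻¹' {k}) T ω =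
      Set.ncard {x : 𝒳 | ∃ t, 1 ≤ t ∧ t ≤ T ∧ X t ω = x} := by
  have hvisited : {k : ℕ | ∃ t, 1 ≤ t ∧ t ≤ T ∧ X t ω ∈ S ∩ g ⁻¹' {k}} =
      g '' {x : 𝒳 | ∃ t, 1 ≤ t ∧ t ≤ T ∧ X t ω = x} := by
    ext k
    simp [hS, and_assoc]
  rw [distinctSetCount, hvisited]
  refine (hg.mono ?_).ncard_image
  rintro _ ⟨t, -, -, rfl⟩
  exact hS t

theorem stmt9_general [TopologicalSpace 𝒳]
    [TopologicalSpace.MetrizableSpace 𝒳] [BorelSpace 𝒳]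
    (hno : ¬ ∃ μ : Measure 𝒳, IsProbabilityMeasure μ ∧ ∀ x : 𝒳, μ {x} = 0)
    (P : Measure Ω) [IsProbabilityMeasure P]
    (X : ℕ → Ω → 𝒳) (hX : ∀ t, Measurable (X t))
    (hC2 : SatisfiesC2 P X) :
    ∀ᵐ ω ∂P, Filter.Tendsto
      (fun T : ℕ => (Set.ncard {x : 𝒳 | ∃ t, 1 ≤ t ∧ t ≤ T ∧ X t ω = x} : ℝ) / T)
      Filter.atTop (nhds 0) := by
  set S := ⋃ t, {x : 𝒳 | 0 < P.map (X t) {x}}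
  have hS : ∀ᵐ ω ∂P, ∀ t, X t ω ∈ S := ae_all_iff.2 fun t =>
    (ae_of_ae_map (hX t).aemeasurable (Measure.ae_measure_singleton_pos hno _)).mono
      fun ω hω => mem_iUnion.2 ⟨t, hω⟩
  obtain ⟨g, hg⟩ := countable_iff_exists_injOn.1 <|
    countable_iUnion fun t => Measure.countable_setOf_measure_singleton_pos (P.map (X t))
  have hfibers := hC2 (fun k => S ∩ g ⁻¹' {k})
    (fun k => Set.Subsingleton.measurableSet fun x hx y hy =>
      hg hx.1 hy.1 (hx.2.trans hy.2.symm))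
    fun k l hkl =>
      (disjoint_singleton.2 hkl).preimage g |>.mono inter_subset_right inter_subset_right
  filter_upwards [hS, hfibers] with ω hω hlim
  convert hlim using 4 with T
  exact (distinctSetCount_fibers_eq_ncard hg hω T).symm

/-- if 𝒳 admits no non-atomic probability measure, every C2 process
visits a sublinear number of distinct points almost surely. -/
theorem stmt9 [TopologicalSpace 𝒳] [TopologicalSpace.SeparableSpace 𝒳]
    [TopologicalSpace.MetrizableSpace 𝒳] [BorelSpace 𝒳]
    (hno : ¬ ∃ μ : Measure 𝒳, IsProbabilityMeasure μ ∧ ∀ x : 𝒳, μ {x} = 0)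
    (P : Measure Ω) [IsProbabilityMeasure P]
    (X : ℕ → Ω → 𝒳) (hX : ∀ t, Measurable (X t))
    (hC2 : SatisfiesC2 P X) :
    ∀ᵐ ω ∂P, Filter.Tendsto
      (fun T : ℕ => (Set.ncard {x : 𝒳 | ∃ t, 1 ≤ t ∧ t ≤ T ∧ X t ω = x} : ℝ) / T)
      Filter.atTop (nhds 0) :=
  stmt9_general hno P X hX hC2
end
end
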